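/- Fix b > 0 and consider the scalar ODE f'(s) = −(2 − f²)f / (f² + √b·(2 − f²)). For every initial condition f(0) ∈ (0, √2), the maximal solution is defined for all s ∈ ℝ, satisfies f(s) ∈ (0, √2) for all s, is strictly decreasing, and satisfies f(s) → √2 as s → −∞ and f(s) → 0 as s → +∞. -/

import Mathlib

/-!
The function `F c x = c log x - ½ log (2 - x²)`, with `c = √b`, is a first integral: its
derivative `c / x + x / (2 - x²)` is exactly `-1` divided by the right-hand side of the ODE, so
`F (f s) = F f₀ - s` along any solution in `(0, √2)`. Since `F` increases from `-∞` to `+∞` on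
`(0, √2)`, the solution is `f s = F⁻¹ (F f₀ - s)`, and all claimed properties are properties of
the increasing homeomorphism `F⁻¹ : ℝ → (0, √2)`.
-/

open Set Filter Topology

section InverseOnIoo

variable {a b : ℝ} {F : ℝ → ℝ}

noncomputable def orderIsoIooOfStrictMonoOn (hmono : StrictMonoOn F (Ioo a b)) (hab : a < b)
    (hcont : ContinuousOn F (Ioo a b)) (hbot : Tendsto F (𝓝[>] a) atBot)
    (htop : Tendsto F (𝓝[<] b) atTop) : Ioo a b ≃o ℝ :=
  StrictMono.orderIsoOfSurjective (fun x : Ioo a b => F x) (fun x y h => hmono x.2 y.2 h)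
    (surjOn_iff_surjective.1 <| hcont.surjOn_of_tendsto (nonempty_Ioo.2 hab)
      ((tendsto_comp_coe_Ioo_atBot hab).2 hbot) ((tendsto_comp_coe_Ioo_atTop hab).2 htop))

variable (hmono : StrictMonoOn F (Ioo a b)) (hab : a < b) (hcont : ContinuousOn F (Ioo a b))
  (hbot : Tendsto F (𝓝[>] a) atBot) (htop : Tendsto F (𝓝[<] b) atTop)

theorem tendsto_orderIsoIooOfStrictMonoOn_symm_atTop :
    Tendsto (fun y => ((orderIsoIooOfStrictMonoOn hmono hab hcont hbot htop).symm y : ℝ))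
      atTop (𝓝[<] b) :=
  (tendsto_Ioo_atTop (.of_dense _)).1 (OrderIso.tendsto_atTop _)

theorem tendsto_orderIsoIooOfStrictMonoOn_symm_atBot :
    Tendsto (fun y => ((orderIsoIooOfStrictMonoOn hmono hab hcont hbot htop).symm y : ℝ))
      atBot (𝓝[>] a) :=
  (tendsto_Ioo_atBot (.of_dense _)).1 (OrderIso.tendsto_atBot _)

theorem hasDerivAt_orderIsoIooOfStrictMonoOn_symm {F' : ℝ → ℝ}
    (hderiv : ∀ x ∈ Ioo a b, HasDerivAt F (F' x) x) (hF' : ∀ x ∈ Ioo a b, F' x ≠ 0) (y : ℝ) :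
    HasDerivAt (fun y => ((orderIsoIooOfStrictMonoOn hmono hab hcont hbot htop).symm y : ℝ))
      (F' ((orderIsoIooOfStrictMonoOn hmono hab hcont hbot htop).symm y))⁻¹ y := by
  set e := orderIsoIooOfStrictMonoOn hmono hab hcont hbot htop
  exact (hderiv _ (e.symm y).2).of_local_left_inverse
    (continuous_subtype_val.comp e.symm.continuous).continuousAt (hF' _ (e.symm y).2)
    (.of_forall e.apply_symm_apply)

end InverseOnIoo

namespace HolomorphicPlaneProfile

noncomputable def firstIntegral (c x : ℝ) : ℝ := c * Real.log x - Real.log (2 - x ^ 2) / 2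

lemma pos_and_two_sub_sq_pos {x : ℝ} (hx : x ∈ Ioo 0 (Real.sqrt 2)) : 0 < x ∧ 0 < 2 - x ^ 2 := by
  refine ⟨hx.1, ?_⟩
  have : x ^ 2 < 2 := (Real.lt_sqrt hx.1.le).mp hx.2
  linarith

lemma hasDerivAt_firstIntegral {c x : ℝ} (hx : x ∈ Ioo 0 (Real.sqrt 2)) :
    HasDerivAt (firstIntegral c) (c / x + x / (2 - x ^ 2)) x := by
  obtain ⟨hx0, hx2⟩ := pos_and_two_sub_sq_pos hx
  have h : HasDerivAt (fun y => c * Real.log y - Real.log (2 - y ^ 2) / 2)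
      (c * x⁻¹ - -(2 * x) / (2 - x ^ 2) / 2) x := by
    simpa using ((Real.hasDerivAt_log hx0.ne').const_mul c).fun_sub
      ((((hasDerivAt_pow 2 x).const_sub 2).log hx2.ne').div_const 2)
  refine h.congr_deriv ?_
  field_simp
  ring

lemma firstIntegral_deriv_pos {c x : ℝ} (hc : 0 < c) (hx : x ∈ Ioo 0 (Real.sqrt 2)) :
    0 < c / x + x / (2 - x ^ 2) := by
  obtain ⟨hx0, hx2⟩ := pos_and_two_sub_sq_pos hx
  positivity

lemma strictMonoOn_firstIntegral {c : ℝ} (hc : 0 < c) :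
    StrictMonoOn (firstIntegral c) (Ioo 0 (Real.sqrt 2)) :=
  strictMonoOn_of_deriv_pos (convex_Ioo _ _)
    (fun x hx => (hasDerivAt_firstIntegral hx).continuousAt.continuousWithinAt)
    (fun x hx => by
      rw [interior_Ioo] at hx
      rw [(hasDerivAt_firstIntegral hx).deriv]
      exact firstIntegral_deriv_pos hc hx)

lemma continuousOn_firstIntegral (c : ℝ) : ContinuousOn (firstIntegral c) (Ioo 0 (Real.sqrt 2)) :=
  fun _ hx => (hasDerivAt_firstIntegral (c := c) hx).continuousAt.continuousWithinAt

lemma tendsto_firstIntegral_nhdsGT_zero {c : ℝ} (hc : 0 < c) :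
    Tendsto (firstIntegral c) (𝓝[>] 0) atBot := by
  have hlog : Tendsto (fun x : ℝ => Real.log (2 - x ^ 2) / 2) (𝓝[>] 0)
      (𝓝 (Real.log (2 - 0 ^ 2) / 2)) :=
    ((Continuous.continuousAt (by fun_prop)).log (by norm_num)).div_const 2 |>.continuousWithinAt
  exact (Real.tendsto_log_nhdsGT_zero.const_mul_atBot hc).atBot_add hlog.neg
    |>.congr fun x => (sub_eq_add_neg _ _).symm

lemma tendsto_two_sub_sq_nhdsLT_sqrt_two :
    Tendsto (fun x : ℝ => 2 - x ^ 2) (𝓝[<] Real.sqrt 2) (𝓝[>] 0) := by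
  refine tendsto_nhdsWithin_iff.2 ⟨?_, ?_⟩
  · have h : Tendsto (fun x : ℝ => 2 - x ^ 2) (𝓝 (Real.sqrt 2)) (𝓝 (2 - Real.sqrt 2 ^ 2)) :=
      (Continuous.tendsto (by fun_prop) _)
    simpa using h.mono_left nhdsWithin_le_nhds
  · filter_upwards [Ioo_mem_nhdsLT (Real.sqrt_pos.2 two_pos)] with x hx
    exact (pos_and_two_sub_sq_pos hx).2

lemma tendsto_firstIntegral_nhdsLT_sqrt_two (c : ℝ) :
    Tendsto (firstIntegral c) (𝓝[<] Real.sqrt 2) atTop := by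
  have hlog : Tendsto (fun x : ℝ => c * Real.log x) (𝓝[<] Real.sqrt 2)
      (𝓝 (c * Real.log (Real.sqrt 2))) :=
    ((Real.continuousAt_log (Real.sqrt_pos.2 two_pos).ne').const_mul c).continuousWithinAt
  have hsing : Tendsto (fun x : ℝ => -(Real.log (2 - x ^ 2) / 2)) (𝓝[<] Real.sqrt 2) atTop :=
    tendsto_neg_atBot_atTop.comp
      ((Real.tendsto_log_nhdsGT_zero.comp tendsto_two_sub_sq_nhdsLT_sqrt_two).atBot_div_const
        two_pos)
  exact (hsing.atTop_add hlog).congr fun x => by simp only [firstIntegral]; ring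

lemma neg_inv_deriv_firstIntegral {c : ℝ} (hc : 0 < c) {x : ℝ} (hx : x ∈ Ioo 0 (Real.sqrt 2)) :
    -(c / x + x / (2 - x ^ 2))⁻¹ = -((2 - x ^ 2) * x) / (x ^ 2 + c * (2 - x ^ 2)) := by
  obtain ⟨hx0, hx2⟩ := pos_and_two_sub_sq_pos hx
  have : 0 < x ^ 2 + c * (2 - x ^ 2) := by positivity
  field_simp
  ring

end HolomorphicPlaneProfile

open HolomorphicPlaneProfile

theorem holomorphic_plane_profile_ODE
    (b : ℝ) (hb : 0 < b) (f₀ : ℝ) (hf₀ : f₀ ∈ Ioo 0 (Real.sqrt 2)) :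
    ∃ f : ℝ → ℝ,
      f 0 = f₀ ∧
      (∀ s : ℝ, HasDerivAt f
        (-((2 - f s ^ 2) * f s) / (f s ^ 2 + Real.sqrt b * (2 - f s ^ 2))) s) ∧
      (∀ s : ℝ, f s ∈ Ioo 0 (Real.sqrt 2)) ∧
      StrictAnti f ∧
      Tendsto f atBot (nhds (Real.sqrt 2)) ∧
      Tendsto f atTop (nhds 0) := by
  have hc : 0 < Real.sqrt b := Real.sqrt_pos.2 hb
  have hmono := strictMonoOn_firstIntegral hc
  have hpos : (0 : ℝ) < Real.sqrt 2 := Real.sqrt_pos.2 two_pos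
  have hcont := continuousOn_firstIntegral (Real.sqrt b)
  have hbot := tendsto_firstIntegral_nhdsGT_zero hc
  have htop := tendsto_firstIntegral_nhdsLT_sqrt_two (Real.sqrt b)
  set e := orderIsoIooOfStrictMonoOn hmono hpos hcont hbot htop
  set K := firstIntegral (Real.sqrt b) f₀
  have hK_atBot : Tendsto (fun s : ℝ => K - s) atBot atTop := by
    simpa [sub_eq_add_neg] using tendsto_atTop_add_const_left _ K tendsto_neg_atBot_atTop
  have hK_atTop : Tendsto (fun s : ℝ => K - s) atTop atBot := by
    simpa [sub_eq_add_neg] using tendsto_atBot_add_const_left _ K tendsto_neg_atTop_atBot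
  refine ⟨fun s => e.symm (K - s), ?_, fun s => ?_, fun s => (e.symm _).2, ?_, ?_, ?_⟩
  · simp only [sub_zero]
    exact congrArg Subtype.val (e.symm_apply_apply ⟨f₀, hf₀⟩)
  · rw [← neg_inv_deriv_firstIntegral hc (e.symm (K - s)).2, ← mul_neg_one]
    exact (hasDerivAt_orderIsoIooOfStrictMonoOn_symm hmono hpos hcont hbot htop
      (fun _ hx => hasDerivAt_firstIntegral hx) (fun _ hx => (firstIntegral_deriv_pos hc hx).ne')
      _).comp s ((hasDerivAt_id s).const_sub K)
  · exact fun s t hst => Subtype.strictMono_coe _ (e.symm.strictMono (by linarith))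
  · exact ((tendsto_orderIsoIooOfStrictMonoOn_symm_atTop hmono hpos hcont hbot htop).mono_right
      nhdsWithin_le_nhds).comp hK_atBot
  · exact ((tendsto_orderIsoIooOfStrictMonoOn_symm_atBot hmono hpos hcont hbot htop).mono_right
      nhdsWithin_le_nhds).comp hK_atTop
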